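/- For every modulus κ with 0 < κ < 1, the function y : ℝ → ℝ defined by y(u) = rn(√8·u) satisfies the differential equation (y'(u))² = T₄(y(u)) − (1 − 2κ²) for all real u, where T₄ is the degree-four Chebyshev polynomial of the first kind; equivalently, (y'(u))² = 8·y(u)⁴ − 8·y(u)² + 2κ². -/

import Mathlib

open Real

/-- The Gauss hypergeometric series `F(a, b; c; x)` with real parameters. -/
noncomputable def hyperF (a b c x : ℝ) : ℝ :=
  ∑' n : ℕ, (Polynomial.eval a (ascPochhammer ℝ n) * Polynomial.eval b (ascPochhammer ℝ n) /
      (Polynomial.eval c (ascPochhammer ℝ n) * (Nat.factorial n : ℝ))) * x ^ n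

/-- `G κ T = ∫₀^T F(1/4, 3/4; 1/2; κ² sin² t) dt`. -/
noncomputable def G (κ T : ℝ) : ℝ :=
  ∫ t in (0:ℝ)..T, hyperF (1/4) (3/4) (1/2) (κ ^ 2 * Real.sin t ^ 2)

/-- The complete integral `K = G κ (π/2)`. -/
noncomputable def K (κ : ℝ) : ℝ := G κ (Real.pi / 2)

/-- The auxiliary function `ψ = arcsin (κ sin φ)`. -/
noncomputable def psi (κ : ℝ) (φ : ℝ → ℝ) (u : ℝ) : ℝ :=
  Real.arcsin (κ * Real.sin (φ u))

/-- The root function `rn = sin (ψ/2)`. -/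
noncomputable def rn (κ : ℝ) (φ : ℝ → ℝ) (u : ℝ) : ℝ :=
  Real.sin (psi κ φ u / 2)

/-!
Writing `z = κ sin φ = sin ψ`, the integrand of `G` is the even part of the binomial series of
`(1 - z)^(-1/2)`, i.e. `((1 - z)^(-1/2) + (1 + z)^(-1/2)) / 2`, which is twice the derivative of
`z ↦ sin (arcsin z / 2)`. Along the inverse `φ` of `G` the chain rule therefore collapses to
`d rn / dT = κ cos φ / 2`, and squaring with `κ² sin² φ = sin² ψ = 4 rn² (1 - rn²)` gives
`(d rn / dT)² = (8 rn⁴ - 8 rn² + 2κ²) / 8`; the substitution `T = √8 u` removes the factor `1/8`.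
-/

open Polynomial

section Hypergeometric

open scoped Nat

theorem ascPochhammer_eval_two_mul {R : Type*} [CommRing R] {a b : R} (hab : 2 * b = 2 * a + 1)
    (m : ℕ) :
    (ascPochhammer R (2 * m)).eval (2 * a) =
      4 ^ m * (ascPochhammer R m).eval a * (ascPochhammer R m).eval b := by
  induction m with
  | zero => simp
  | succ m ih =>
    rw [show 2 * (m + 1) = 2 * m + 1 + 1 by ring, ascPochhammer_succ_eval,
      ascPochhammer_succ_eval, ih, ascPochhammer_succ_eval, ascPochhammer_succ_eval]
    push_cast
    linear_combination (-4 ^ m * (ascPochhammer R m).eval a * (ascPochhammer R m).eval b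
      * (2 * a + 2 * m)) * hab

theorem Ring.choose_add_sub_one_eq_ascPochhammer_div {K : Type*} [Field K] [CharZero K] (a : K)
    (n : ℕ) : Ring.choose (a + n - 1) n = (ascPochhammer K n).eval a / n ! := by
  rw [Ring.choose_eq_smul, descPochhammer_smeval_eq_ascPochhammer, ascPochhammer_smeval_eq_eval,
    smul_eq_mul, inv_mul_eq_div]
  congr 2
  ring

theorem hasSum_one_div_one_sub_rpow (a : ℝ) {x : ℝ} (hx : |x| < 1) :
    HasSum (fun n : ℕ => (ascPochhammer ℝ n).eval a / n ! * x ^ n) (1 / (1 - x) ^ a) := by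
  have := (Real.one_div_one_sub_rpow_hasFPowerSeriesOnBall_zero a).hasSum (y := x)
    (by simpa [enorm_eq_nnnorm, ← NNReal.coe_lt_coe] using hx)
  simpa [FormalMultilinearSeries.ofScalars, Ring.choose_add_sub_one_eq_ascPochhammer_div] using this

theorem hyperF_coeff_add_half_half (a : ℝ) (m : ℕ) :
    (ascPochhammer ℝ m).eval a * (ascPochhammer ℝ m).eval (a + 1 / 2) /
        ((ascPochhammer ℝ m).eval (1 / 2) * m !) =
      (ascPochhammer ℝ (2 * m)).eval (2 * a) / (2 * m)! := by
  have hnum := ascPochhammer_eval_two_mul (a := a) (b := a + 1 / 2) (by ring) m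
  have hden := ascPochhammer_eval_two_mul (R := ℝ) (a := 1 / 2) (b := 1) (by ring) m
  rw [ascPochhammer_eval_one, mul_one_div_cancel two_ne_zero, ascPochhammer_eval_one] at hden
  have : (ascPochhammer ℝ m).eval (1 / 2) ≠ 0 := (ascPochhammer_pos m _ one_half_pos).ne'
  rw [hnum, hden]
  field_simp

theorem hyperF_add_half_half_sq (a : ℝ) {z : ℝ} (hz : |z| < 1) :
    hyperF a (a + 1 / 2) (1 / 2) (z ^ 2) =
      (1 / (1 - z) ^ (2 * a) + 1 / (1 + z) ^ (2 * a)) / 2 := by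
  have hplus := hasSum_one_div_one_sub_rpow (2 * a) hz
  have hminus := hasSum_one_div_one_sub_rpow (2 * a) (x := -z) (by rwa [abs_neg])
  rw [sub_neg_eq_add] at hminus
  -- odd powers cancel between the series at `z` and at `-z`
  have heven := ((Function.Injective.hasSum_iff (g := fun m : ℕ => 2 * m)
    (fun _ _ h => by simpa using h) fun n hn => ?_).2 (hplus.add hminus)).div_const 2
  · refine (tsum_congr fun m => ?_).trans heven.tsum_eq
    simp only [Function.comp_apply, hyperF_coeff_add_half_half, (even_two_mul m).neg_pow, pow_mul]
    ring
  · obtain ⟨m, rfl⟩ : Odd n := Nat.not_even_iff_odd.1 fun ⟨m, hm⟩ => hn ⟨m, by simp only; omega⟩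
    rw [Odd.neg_pow ⟨m, rfl⟩]
    ring

theorem hyperF_quarter_sq {z : ℝ} (hz : |z| < 1) :
    hyperF (1 / 4) (3 / 4) (1 / 2) (z ^ 2) = (1 / √(1 - z) + 1 / √(1 + z)) / 2 := by
  have h := hyperF_add_half_half_sq (1 / 4) hz
  norm_num at h
  rw [h, sqrt_eq_rpow, sqrt_eq_rpow]
  norm_num

end Hypergeometric

theorem Polynomial.Chebyshev.eval_T_four {R : Type*} [CommRing R] (x : R) :
    (T R 4).eval x = 8 * x ^ 4 - 8 * x ^ 2 + 1 := by
  rw [show (4 : ℤ) = 2 * 2 by norm_num, T_mul, T_two]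
  simp only [eval_comp, eval_sub, eval_mul, eval_pow, eval_X, eval_ofNat, eval_one]
  ring

theorem sq_eq_four_mul_sin_half_arcsin_sq {z : ℝ} (h₁ : -1 ≤ z) (h₂ : z ≤ 1) :
    z ^ 2 = 4 * sin (arcsin z / 2) ^ 2 * (1 - sin (arcsin z / 2) ^ 2) := by
  conv_lhs => rw [← sin_arcsin h₁ h₂, ← mul_div_cancel₀ (arcsin z) two_ne_zero, sin_two_mul]
  rw [← cos_sq']
  ring

theorem cos_half_arcsin {x : ℝ} (hx₁ : -1 ≤ x) (hx₂ : x ≤ 1) :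
    cos (arcsin x / 2) = (√(1 - x) + √(1 + x)) / 2 := by
  have hcos : 0 ≤ cos (arcsin x / 2) := cos_nonneg_of_mem_Icc
    ⟨by linarith [neg_pi_div_two_le_arcsin x, pi_pos], by linarith [arcsin_le_pi_div_two x, pi_pos]⟩
  refine (pow_left_inj₀ hcos (by positivity) two_ne_zero).1 ?_
  have hprod : √(1 - x) * √(1 + x) = √(1 - x ^ 2) := by
    rw [← sqrt_mul (by linarith)]; ring_nf
  rw [cos_sq, mul_div_cancel₀ _ two_ne_zero, cos_arcsin, div_pow, add_sq, sq_sqrt (by linarith),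
    sq_sqrt (by linarith), mul_assoc, hprod]
  ring

theorem hasDerivAt_sin_half_arcsin {x : ℝ} (hx : |x| < 1) :
    HasDerivAt (fun y => sin (arcsin y / 2)) ((1 / √(1 - x) + 1 / √(1 + x)) / 4) x := by
  obtain ⟨hx₁, hx₂⟩ := abs_lt.1 hx
  convert ((hasDerivAt_arcsin hx₁.ne' hx₂.ne).div_const 2).sin using 1
  have hm : 0 < √(1 - x) := sqrt_pos.2 (by linarith)
  have hp : 0 < √(1 + x) := sqrt_pos.2 (by linarith)
  have hprod : √(1 - x ^ 2) = √(1 - x) * √(1 + x) := by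
    rw [← sqrt_mul (by linarith)]; ring_nf
  rw [cos_half_arcsin hx₁.le hx₂.le, hprod]
  field_simp
  ring

section Modulus

variable {κ : ℝ}

theorem abs_mul_sin_lt_one (hκ : |κ| < 1) (t : ℝ) : |κ * sin t| < 1 := by
  rw [abs_mul]
  exact lt_of_le_of_lt (mul_le_of_le_one_right (abs_nonneg κ) (abs_sin_le_one t)) hκ

theorem hyperF_quarter_mul_sin_sq (hκ : |κ| < 1) (t : ℝ) :
    hyperF (1 / 4) (3 / 4) (1 / 2) (κ ^ 2 * sin t ^ 2) =
      (1 / √(1 - κ * sin t) + 1 / √(1 + κ * sin t)) / 2 := by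
  rw [← mul_pow, hyperF_quarter_sq (abs_mul_sin_lt_one hκ t)]

theorem hyperF_quarter_mul_sin_sq_pos (hκ : |κ| < 1) (t : ℝ) :
    0 < hyperF (1 / 4) (3 / 4) (1 / 2) (κ ^ 2 * sin t ^ 2) := by
  obtain ⟨h₁, h₂⟩ := abs_lt.1 (abs_mul_sin_lt_one hκ t)
  rw [hyperF_quarter_mul_sin_sq hκ]
  have := sqrt_pos.2 (sub_pos.2 h₂)
  have := sqrt_pos.2 (neg_lt_iff_pos_add'.1 h₁)
  positivity

theorem continuous_hyperF_quarter_mul_sin_sq (hκ : |κ| < 1) :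
    Continuous fun t => hyperF (1 / 4) (3 / 4) (1 / 2) (κ ^ 2 * sin t ^ 2) := by
  simp only [hyperF_quarter_mul_sin_sq hκ]
  have hbound (t : ℝ) := abs_lt.1 (abs_mul_sin_lt_one hκ t)
  refine Continuous.div_const (Continuous.add ?_ ?_) 2 <;>
    refine continuous_const.div (by fun_prop) fun t => (sqrt_pos.2 ?_).ne' <;>
    linarith [hbound t]

theorem hasDerivAt_G (hκ : |κ| < 1) (T : ℝ) :
    HasDerivAt (G κ) (hyperF (1 / 4) (3 / 4) (1 / 2) (κ ^ 2 * sin T ^ 2)) T :=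
  (continuous_hyperF_quarter_mul_sin_sq hκ).integral_hasStrictDerivAt 0 T |>.hasDerivAt

theorem strictMono_G (hκ : |κ| < 1) : StrictMono (G κ) :=
  strictMono_of_deriv_pos fun T => (hasDerivAt_G hκ T).deriv ▸ hyperF_quarter_mul_sin_sq_pos hκ T

theorem hasDerivAt_sin_half_arcsin_mul_sin (hκ : |κ| < 1) (t : ℝ) :
    HasDerivAt (fun x => sin (arcsin (κ * sin x) / 2))
      (hyperF (1 / 4) (3 / 4) (1 / 2) (κ ^ 2 * sin t ^ 2) / 2 * (κ * cos t)) t := by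
  rw [hyperF_quarter_mul_sin_sq hκ, div_div, show (2 : ℝ) * 2 = 4 by norm_num]
  exact (hasDerivAt_sin_half_arcsin (abs_mul_sin_lt_one hκ t)).comp t
    ((hasDerivAt_sin t).const_mul κ)

theorem hasDerivAt_rn (hκ : |κ| < 1) {φ : ℝ → ℝ} (hφ : Function.RightInverse φ (G κ)) (T : ℝ) :
    HasDerivAt (rn κ φ) (κ * cos (φ T) / 2) T := by
  have hφc : Continuous φ := ((strictMono_G hκ).orderIsoOfRightInverse _ φ hφ).symm.continuous
  have hpos := hyperF_quarter_mul_sin_sq_pos hκ (φ T)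
  have hφ' := (hasDerivAt_G hκ (φ T)).of_local_left_inverse hφc.continuousAt hpos.ne'
    (.of_forall hφ)
  refine ((hasDerivAt_sin_half_arcsin_mul_sin hκ (φ T)).comp T hφ').congr_deriv ?_
  field_simp

end Modulus

theorem stmt17_general (κ : ℝ) (hκ₀ : 0 < κ) (hκ₁ : κ < 1)
    (φ : ℝ → ℝ)
    (hφ₂ : Function.RightInverse φ (G κ)) :
    ∀ u : ℝ,
      (deriv (fun v : ℝ => rn κ φ (Real.sqrt 8 * v)) u) ^ 2 =
        Polynomial.eval (rn κ φ (Real.sqrt 8 * u)) (Polynomial.Chebyshev.T ℝ 4)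
          - (1 - 2 * κ ^ 2) ∧
      (deriv (fun v : ℝ => rn κ φ (Real.sqrt 8 * v)) u) ^ 2 =
        8 * (rn κ φ (Real.sqrt 8 * u)) ^ 4 - 8 * (rn κ φ (Real.sqrt 8 * u)) ^ 2
          + 2 * κ ^ 2 := by
  intro u
  have hκ : |κ| < 1 := abs_lt.2 ⟨by linarith, hκ₁⟩
  set T := √8 * u
  have hderiv : deriv (fun v : ℝ => rn κ φ (√8 * v)) u = κ * cos (φ T) / 2 * √8 :=
    ((hasDerivAt_rn hκ hφ₂ T).comp u ((hasDerivAt_id u).const_mul √8 |>.congr_deriv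
      (mul_one _))).deriv
  obtain ⟨h₁, h₂⟩ := abs_le.1 (abs_mul_sin_lt_one hκ (φ T)).le
  have hsq := sq_eq_four_mul_sin_half_arcsin_sq h₁ h₂
  have hquartic : deriv (fun v : ℝ => rn κ φ (√8 * v)) u ^ 2 =
      8 * rn κ φ T ^ 4 - 8 * rn κ φ T ^ 2 + 2 * κ ^ 2 := by
    rw [hderiv, rn, psi]
    linear_combination (2 * κ ^ 2) * cos_sq' (φ T) - 2 * hsq
      + (κ ^ 2 * cos (φ T) ^ 2 / 4) * sq_sqrt (show (0 : ℝ) ≤ 8 by norm_num)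
  refine ⟨?_, hquartic⟩
  rw [Polynomial.Chebyshev.eval_T_four, hquartic]
  ring

theorem stmt17 (κ : ℝ) (hκ₀ : 0 < κ) (hκ₁ : κ < 1)
    (φ : ℝ → ℝ) (hφ₁ : Function.LeftInverse φ (G κ))
    (hφ₂ : Function.RightInverse φ (G κ)) :
    ∀ u : ℝ,
      (deriv (fun v : ℝ => rn κ φ (Real.sqrt 8 * v)) u) ^ 2 =
        Polynomial.eval (rn κ φ (Real.sqrt 8 * u)) (Polynomial.Chebyshev.T ℝ 4)
          - (1 - 2 * κ ^ 2) ∧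
      (deriv (fun v : ℝ => rn κ φ (Real.sqrt 8 * v)) u) ^ 2 =
        8 * (rn κ φ (Real.sqrt 8 * u)) ^ 4 - 8 * (rn κ φ (Real.sqrt 8 * u)) ^ 2
          + 2 * κ ^ 2 :=
  stmt17_general κ hκ₀ hκ₁ φ hφ₂
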